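/- Let s₃ ≈ 1.755 be the unique root in the interval (1,2) of s³ − 2s² + s − 1 = 0. Fix a real s with (1 + √5)/2 ≤ s ≤ s₃ and consider the instance of the favorite-machine scheduling game on two machines with parameter s consisting of four jobs: A of size 1/s with favorite machine 2; B of size (s − 1)/s with favorite machine 1; C of size 1/s with favorite machine 1; and E of size 2 − s with favorite machine 2. Then the allocation assigning A and C to machine 1 and B and E to machine 2 is a strong equilibrium whose makespan equals (s + 1)/s, while the optimal makespan of this instance is at most 1. Consequently, the strong price of anarchy at parameter s is at least (s + 1)/s. -/

import Mathlib

open Finset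

/-- Processing time of job `j` on machine `i` in the favorite-machine model:
`q j` on the favorite machine `f j` and `s * q j` on the other machine. -/
noncomputable def ptime (s : ℝ) {n : ℕ} (q : Fin n → ℝ) (f : Fin n → Fin 2)
    (i : Fin 2) (j : Fin n) : ℝ :=
  if f j = i then q j else s * q j

/-- Load of machine `i` under allocation `x`. -/
noncomputable def load (s : ℝ) {n : ℕ} (q : Fin n → ℝ) (f : Fin n → Fin 2)
    (x : Fin n → Fin 2) (i : Fin 2) : ℝ :=
  ∑ j ∈ Finset.univ.filter (fun j => x j = i), ptime s q f i j

/-- Makespan (maximum load) of allocation `x`. -/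
noncomputable def makespan (s : ℝ) {n : ℕ} (q : Fin n → ℝ) (f : Fin n → Fin 2)
    (x : Fin n → Fin 2) : ℝ :=
  max (load s q f x 0) (load s q f x 1)

/-- The optimal (minimum) makespan over all allocations. -/
noncomputable def optMakespan (s : ℝ) {n : ℕ} (q : Fin n → ℝ) (f : Fin n → Fin 2) : ℝ :=
  ⨅ y : Fin n → Fin 2, makespan s q f y

/-- Pure Nash equilibrium: no job can move to the other machine and find there
a load smaller than its current cost. -/
def IsNE (s : ℝ) {n : ℕ} (q : Fin n → ℝ) (f : Fin n → Fin 2)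
    (x : Fin n → Fin 2) : Prop :=
  ∀ j : Fin n, ∀ i : Fin 2, i ≠ x j →
    load s q f x (x j) ≤ load s q f (Function.update x j i) i

/-- Strong equilibrium: for every deviation `y` differing from `x` on a nonempty
set of jobs, some deviating job does not improve its cost. -/
def IsSE (s : ℝ) {n : ℕ} (q : Fin n → ℝ) (f : Fin n → Fin 2)
    (x : Fin n → Fin 2) : Prop :=
  ∀ y : Fin n → Fin 2, (∃ j, y j ≠ x j) →
    ∃ j, y j ≠ x j ∧ load s q f x (x j) ≤ load s q f y (y j)

/-!
At the allocation `(A C | B E)` the loads are `1 + 1/s` and `1`, while sending every job to its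
favorite machine gives loads `1` and `1/s + 2 - s`, which is at most `1` exactly when `s ≥ φ`.
A blocking coalition must strictly improve each of its members; whichever jobs deviate, some
member lands on a machine whose new load already reaches its old cost. The only coalition for
which this needs an upper bound on `s` is `{A, E}` swapping machines: `E` then faces
`1/s + s(2 - s)`, which is at least `1` exactly when `s³ - 2s² + s - 1 ≤ 0`, i.e. when `s ≤ s₃`.
-/

section General

variable {n : ℕ} {s : ℝ} {q : Fin n → ℝ} {f : Fin n → Fin 2}

lemma ptime_nonneg (hs : 0 ≤ s) (hq : ∀ j, 0 ≤ q j) (i : Fin 2) (j : Fin n) :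
    0 ≤ ptime s q f i j := by
  unfold ptime
  split_ifs
  exacts [hq j, mul_nonneg hs (hq j)]

lemma sum_ptime_le_load (hs : 0 ≤ s) (hq : ∀ j, 0 ≤ q j) {y : Fin n → Fin 2} {i : Fin 2}
    {S : Finset (Fin n)} (hS : ∀ j ∈ S, y j = i) :
    ∑ j ∈ S, ptime s q f i j ≤ load s q f y i :=
  sum_le_sum_of_subset_of_nonneg (fun j hj => mem_filter.2 ⟨mem_univ j, hS j hj⟩)
    fun j _ _ => ptime_nonneg hs hq i j

lemma exists_not_improving_of_le_sum_ptime (hs : 0 ≤ s) (hq : ∀ j, 0 ≤ q j)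
    {x y : Fin n → Fin 2} (j : Fin n) (S : Finset (Fin n)) (hj : y j ≠ x j)
    (hS : ∀ k ∈ S, y k = y j) (hle : load s q f x (x j) ≤ ∑ k ∈ S, ptime s q f (y j) k) :
    ∃ j, y j ≠ x j ∧ load s q f x (x j) ≤ load s q f y (y j) :=
  ⟨j, hj, hle.trans (sum_ptime_le_load hs hq hS)⟩

lemma optMakespan_le_makespan (y : Fin n → Fin 2) : optMakespan s q f ≤ makespan s q f y :=
  ciInf_le (Set.finite_range _).bddBelow y

end General

lemma cubic_nonpos_of_le_root {s t : ℝ} (hs : 1 ≤ s) (hst : s ≤ t)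
    (ht : t ^ 3 - 2 * t ^ 2 + t - 1 = 0) : s ^ 3 - 2 * s ^ 2 + s - 1 ≤ 0 := by
  have hfactor : 0 ≤ (t - s) *
      ((t - 1) ^ 2 + (t - 1) * (s - 1) + (s - 1) ^ 2 + (t - 1) + (s - 1)) := by
    have : 0 ≤ t - 1 := by linarith
    have : 0 ≤ s - 1 := by linarith
    apply mul_nonneg (by linarith)
    positivity
  linarith

namespace FourJobs

-- Jobs `A, B, C, E` are indices `0, 1, 2, 3`; machines `1, 2` are indices `0, 1`.
noncomputable def size (s : ℝ) : Fin 4 → ℝ := ![1/s, (s - 1)/s, 1/s, 2 - s]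

def favorite : Fin 4 → Fin 2 := ![1, 0, 0, 1]

def equilibrium : Fin 4 → Fin 2 := ![0, 1, 0, 1]

variable {s : ℝ}

lemma size_nonneg (h1 : 1 ≤ s) (h2 : s ≤ 2) (j : Fin 4) : 0 ≤ size s j := by
  fin_cases j <;> simp [size] <;> first | positivity | linarith

lemma ptime_zero (hs : s ≠ 0) :
    ptime s (size s) favorite 0 = ![1, 1 - s⁻¹, s⁻¹, s * (2 - s)] := by
  funext j
  fin_cases j <;> simp [ptime, size, favorite, hs, sub_div]

lemma ptime_one (hs : s ≠ 0) : ptime s (size s) favorite 1 = ![s⁻¹, s - 1, 1, 2 - s] := by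
  funext j
  fin_cases j <;> simp [ptime, size, favorite, hs, mul_div_cancel₀]

lemma load_equilibrium_zero (hs : s ≠ 0) :
    load s (size s) favorite equilibrium 0 = 1 + s⁻¹ := by
  rw [load, sum_filter, Fin.sum_univ_four, ptime_zero hs]
  simp [equilibrium]

lemma load_equilibrium_one (hs : s ≠ 0) : load s (size s) favorite equilibrium 1 = 1 := by
  rw [load, sum_filter, Fin.sum_univ_four, ptime_one hs]
  simp [equilibrium]
  norm_num

lemma makespan_equilibrium (hs : 0 < s) :
    makespan s (size s) favorite equilibrium = (s + 1)/s := by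
  rw [makespan, load_equilibrium_zero hs.ne', load_equilibrium_one hs.ne',
    max_eq_left (by simp [hs.le]), add_div, div_self hs.ne', one_div]

lemma makespan_favorite_le_one (hφ : Real.goldenRatio ≤ s) :
    makespan s (size s) favorite favorite ≤ 1 := by
  have hs : 1 < s := Real.one_lt_goldenRatio.trans_le hφ
  have hinv : s⁻¹ ≤ s - 1 := by
    rw [inv_le_iff_one_le_mul₀ (by linarith)]
    nlinarith [Real.goldenRatio_sq, Real.one_lt_goldenRatio]
  rw [makespan, load, load, sum_filter, sum_filter, Fin.sum_univ_four, Fin.sum_univ_four,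
    ptime_zero (by positivity), ptime_one (by positivity)]
  simp [favorite]
  linarith

lemma one_le_inv_add_mul_two_sub (hs : 0 < s) (hcubic : s ^ 3 - 2 * s ^ 2 + s - 1 ≤ 0) :
    1 ≤ s⁻¹ + s * (2 - s) := by
  rw [← sub_nonneg]
  have : s⁻¹ + s * (2 - s) - 1 = -(s ^ 3 - 2 * s ^ 2 + s - 1) / s := by field_simp; ring
  rw [this]
  exact div_nonneg (by linarith) hs.le

lemma isSE_equilibrium (hs : 1 < s) (hcubic : s ^ 3 - 2 * s ^ 2 + s - 1 ≤ 0) :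
    IsSE s (size s) favorite equilibrium := by
  have hs0 : 0 < s := by linarith
  have hs2 : s ≤ 2 := by nlinarith
  have hinv : s⁻¹ ≤ 1 := inv_le_one_of_one_le₀ hs.le
  have hcorner := one_le_inv_add_mul_two_sub hs0 hcubic
  have hq := size_nonneg hs.le hs2
  have p0 := ptime_zero hs0.ne'
  have p1 := ptime_one hs0.ne'
  have l0 : load s (size s) favorite equilibrium 0 = 1 + s⁻¹ := load_equilibrium_zero hs0.ne'
  have l1 : load s (size s) favorite equilibrium 1 = 1 := load_equilibrium_one hs0.ne'
  intro y hy
  have block :=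
    exists_not_improving_of_le_sum_ptime hs0.le hq (f := favorite) (x := equilibrium) (y := y)
  obtain hB | hB : y 1 = 0 ∨ y 1 = 1 := by omega
  · obtain hA | hA : y 0 = 0 ∨ y 0 = 1 := by omega
    · refine block 1 {0, 1} (by simp [hB, equilibrium]) (by simp [hA, hB]) (l1.trans_le ?_)
      simp [hB, p0]
      linarith
    obtain hC | hC : y 2 = 0 ∨ y 2 = 1 := by omega
    · refine block 1 {1, 2} (by simp [hB, equilibrium]) (by simp [hC, hB]) (l1.trans_le ?_)
      simp [hB, p0]
    · refine block 0 {0, 2} (by simp [hA, equilibrium]) (by simp [hA, hC]) (l0.trans_le ?_)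
      simp [hA, p1]
      linarith
  obtain hE | hE : y 3 = 0 ∨ y 3 = 1 := by omega
  · obtain hA | hA : y 0 = 0 ∨ y 0 = 1 := by omega
    · refine block 3 {0} (by simp [hE, equilibrium]) (by simp [hA, hE]) (l1.trans_le ?_)
      simp [hE, p0]
    obtain hC | hC : y 2 = 0 ∨ y 2 = 1 := by omega
    · refine block 3 {2, 3} (by simp [hE, equilibrium]) (by simp [hC, hE]) (l1.trans_le ?_)
      simpa [hE, p0] using hcorner
    · refine block 0 {0, 1, 2} (by simp [hA, equilibrium]) (by simp [hA, hB, hC]) (l0.trans_le ?_)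
      simp [hA, p1]
      linarith
  obtain hA | hA : y 0 = 0 ∨ y 0 = 1 := by omega
  · obtain hC | hC : y 2 = 0 ∨ y 2 = 1 := by omega
    · obtain ⟨j, hj⟩ := hy
      fin_cases j <;> simp_all [equilibrium]
    · refine block 2 {1, 2, 3} (by simp [hC, equilibrium]) (by simp [hB, hC, hE]) (l0.trans_le ?_)
      simp [hC, p1]
      linarith
  · refine block 0 {0, 1, 3} (by simp [hA, equilibrium]) (by simp [hA, hB, hE]) (l0.trans_le ?_)
    simp [hA, p1]
    linarith

end FourJobs

theorem spoa_lower_interval3_general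
    (s₃ : ℝ)
    (hs₃root : s₃^3 - 2*s₃^2 + s₃ - 1 = 0)
    (s : ℝ) (hs : (1 + Real.sqrt 5)/2 ≤ s) (hs' : s ≤ s₃)
    (q : Fin 4 → ℝ) (hq : q = ![1/s, (s - 1)/s, 1/s, 2 - s])
    (f : Fin 4 → Fin 2) (hf : f = ![1, 0, 0, 1])
    (x : Fin 4 → Fin 2) (hx : x = ![0, 1, 0, 1]) :
    IsSE s q f x ∧
      makespan s q f x = (s + 1)/s ∧
      optMakespan s q f ≤ 1 ∧
      ((s + 1)/s) * optMakespan s q f ≤ makespan s q f x := by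
  subst hq hf hx
  have hs1 : 1 < s := Real.one_lt_goldenRatio.trans_le hs
  have hopt : optMakespan s (FourJobs.size s) FourJobs.favorite ≤ 1 :=
    (optMakespan_le_makespan _).trans (FourJobs.makespan_favorite_le_one hs)
  have hmakespan := FourJobs.makespan_equilibrium (zero_lt_one.trans hs1)
  refine ⟨FourJobs.isSE_equilibrium hs1 (cubic_nonpos_of_le_root hs1.le hs' hs₃root), hmakespan,
    hopt, ?_⟩
  exact (mul_le_of_le_one_right (by positivity) hopt).trans_eq hmakespan.symm

theorem spoa_lower_interval3
    (s₃ : ℝ) (hs₃lo : 1 < s₃) (hs₃hi : s₃ < 2)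
    (hs₃root : s₃^3 - 2*s₃^2 + s₃ - 1 = 0)
    (s : ℝ) (hs : (1 + Real.sqrt 5)/2 ≤ s) (hs' : s ≤ s₃)
    (q : Fin 4 → ℝ) (hq : q = ![1/s, (s - 1)/s, 1/s, 2 - s])
    (f : Fin 4 → Fin 2) (hf : f = ![1, 0, 0, 1])
    (x : Fin 4 → Fin 2) (hx : x = ![0, 1, 0, 1]) :
    IsSE s q f x ∧
      makespan s q f x = (s + 1)/s ∧
      optMakespan s q f ≤ 1 ∧
      ((s + 1)/s) * optMakespan s q f ≤ makespan s q f x :=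
  spoa_lower_interval3_general s₃ hs₃root s hs hs' q hq f hf x hx
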